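/- Let n ≥ 1 be an integer and K ≥ 1 a real number. There exists a constant C = C(n, K) such that the following holds. Let R > 0, let γ : ℝ^n → [0, ∞) be measurable with M₁ := ∫_{ℝ^n} |β| γ(β) dβ < ∞ and M_{K+1} := ∫_{ℝ^n} |β|^{K+1} γ(β) dβ < ∞, and let f : ℝ^n → [0, ∞) be measurable. Then for every α ∈ ℝ^n with (f ∗ φ_R)(α) < ∞, ∫_{ℝ^n} |(f ∗ φ_R)(α) − (f ∗ φ_R)(α + β)| γ(β) dβ ≤ C R^{−1} (M₁ + R^{−K} M_{K+1}) (f ∗ φ_R)(α). -/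

import Mathlib

/-!
Write `φ_R(x) = R⁻ⁿ ⟨x/R⟩^(-K)` with `⟨x⟩ = √(1 + |x|²)`. The bracket is 1-Lipschitz (it is the
norm of `(1, x)`), so for `s = |β|/R` the ratio `⟨x/R⟩ / ⟨(x + β)/R⟩` lies in `[(1 + s)⁻¹, 1 + s]`
and hence `|φ_R(x) − φ_R(x + β)| ≤ ((1 + s)^K − 1) φ_R(x)`. Integrating this against `f` gives the
same bound for `f ∗ φ_R`, and `(1 + s)^K − 1 ≤ 2^K (s + s^(K+1))` (convexity for `s ≤ 1`,
`1 + s ≤ 2s` otherwise). Integrating against `γ` gives the theorem with `C = 2^K`.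
-/

open MeasureTheory
open scoped ENNReal

/-- The polynomially decaying kernel `φ_R(x) = R^{-n} (1 + |x/R|²)^{-K/2}`. -/
noncomputable def phiR (n : ℕ) (K R : ℝ) (x : EuclideanSpace ℝ (Fin n)) : ℝ :=
  (R ^ n)⁻¹ * (1 + ‖R⁻¹ • x‖ ^ 2) ^ (-(K / 2))

/-- The convolution `(f ∗ φ_R)(α) = ∫ f(ζ) φ_R(α − ζ) dζ`, taken in `[0, ∞]`. -/
noncomputable def convPhi (n : ℕ) (K R : ℝ) (f : EuclideanSpace ℝ (Fin n) → ℝ)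
    (α : EuclideanSpace ℝ (Fin n)) : ℝ≥0∞ :=
  ∫⁻ ζ : EuclideanSpace ℝ (Fin n), ENNReal.ofReal (f ζ * phiR n K R (α - ζ))

/-- The absolute difference `|a − b|` of two extended nonnegative reals. -/
noncomputable def eabsdiff (a b : ℝ≥0∞) : ℝ≥0∞ := (a - b) ⊔ (b - a)

open Real

theorem eabsdiff_le_iff {a b d : ℝ≥0∞} : eabsdiff a b ≤ d ↔ a ≤ b + d ∧ b ≤ a + d := by
  rw [eabsdiff, sup_le_iff, tsub_le_iff_left, tsub_le_iff_left]

theorem eabsdiff_ofReal_le {a b d : ℝ} (h : |a - b| ≤ d) :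
    eabsdiff (ENNReal.ofReal a) (ENNReal.ofReal b) ≤ ENNReal.ofReal d := by
  obtain ⟨h₁, h₂⟩ := abs_sub_le_iff.1 h
  refine eabsdiff_le_iff.2 ⟨?_, ?_⟩ <;>
    refine (ENNReal.ofReal_le_ofReal (by linarith)).trans ENNReal.ofReal_add_le

theorem eabsdiff_mul_left_le (a b c : ℝ≥0∞) : eabsdiff (a * b) (a * c) ≤ a * eabsdiff b c := by
  obtain ⟨h₁, h₂⟩ := (eabsdiff_le_iff (a := b) (b := c)).1 le_rfl
  rw [eabsdiff_le_iff, ← mul_add, ← mul_add]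
  constructor <;> gcongr

theorem eabsdiff_lintegral_le {α : Type*} [MeasurableSpace α] {μ : Measure α} {u v w : α → ℝ≥0∞}
    (hw : AEMeasurable w μ) (h : ∀ x, eabsdiff (u x) (v x) ≤ w x) :
    eabsdiff (∫⁻ x, u x ∂μ) (∫⁻ x, v x ∂μ) ≤ ∫⁻ x, w x ∂μ := by
  rw [eabsdiff_le_iff, ← lintegral_add_right' _ hw, ← lintegral_add_right' _ hw]
  exact ⟨lintegral_mono fun x => (eabsdiff_le_iff.1 (h x)).1,
    lintegral_mono fun x => (eabsdiff_le_iff.1 (h x)).2⟩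

theorem abs_sqrt_one_add_norm_sq_sub_le {E : Type*} [SeminormedAddCommGroup E] (x y : E) :
    |√(1 + ‖x‖ ^ 2) - √(1 + ‖y‖ ^ 2)| ≤ ‖x - y‖ := by
  have hnorm (a : ℝ) (z : E) : ‖WithLp.toLp 2 (a, z)‖ = √(a ^ 2 + ‖z‖ ^ 2) := by
    simp [WithLp.prod_norm_eq_of_L2]
  calc |√(1 + ‖x‖ ^ 2) - √(1 + ‖y‖ ^ 2)|
      = |‖WithLp.toLp 2 ((1 : ℝ), x)‖ - ‖WithLp.toLp 2 ((1 : ℝ), y)‖| := by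
        rw [hnorm, hnorm, one_pow]
    _ ≤ ‖WithLp.toLp 2 ((1 : ℝ), x) - WithLp.toLp 2 ((1 : ℝ), y)‖ := abs_norm_sub_norm_le _ _
    _ = ‖x - y‖ := by
        rw [← WithLp.toLp_sub, Prod.mk_sub_mk, sub_self, hnorm, zero_pow two_ne_zero, zero_add,
          Real.sqrt_sq (norm_nonneg _)]

theorem abs_one_sub_le_of_le_of_inv_le {p c : ℝ} (hp : 0 < p) (h : p ≤ c) (h' : p⁻¹ ≤ c) :
    |1 - p| ≤ c - 1 := by
  rw [abs_le]
  refine ⟨by linarith, ?_⟩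
  rw [inv_le_iff_one_le_mul₀' hp] at h'
  nlinarith

theorem abs_rpow_neg_sub_rpow_neg_le {K A B s : ℝ} (hK : 0 ≤ K) (hA : 1 ≤ A) (hB : 1 ≤ B)
    (hAB : |A - B| ≤ s) : |A ^ (-K) - B ^ (-K)| ≤ ((1 + s) ^ K - 1) * A ^ (-K) := by
  have hA0 : 0 < A := by linarith
  have hB0 : 0 < B := by linarith
  have hs : 0 ≤ s := (abs_nonneg _).trans hAB
  obtain ⟨h₁, h₂⟩ := abs_sub_le_iff.1 hAB
  have hq : A / B ≤ 1 + s := by rw [div_le_iff₀ hB0]; nlinarith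
  have hq' : (A / B)⁻¹ ≤ 1 + s := by rw [inv_div, div_le_iff₀ hA0]; nlinarith
  have key : |1 - (A / B) ^ K| ≤ (1 + s) ^ K - 1 :=
    abs_one_sub_le_of_le_of_inv_le (by positivity)
      (rpow_le_rpow (by positivity) hq hK)
      (by rw [← inv_rpow (by positivity)]; exact rpow_le_rpow (by positivity) hq' hK)
  have hBA : B ^ (-K) = A ^ (-K) * (A / B) ^ K := by
    rw [div_rpow hA0.le hB0.le, rpow_neg hA0.le, rpow_neg hB0.le]
    field_simp
  calc |A ^ (-K) - B ^ (-K)| = |1 - (A / B) ^ K| * A ^ (-K) := by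
        rw [hBA, ← mul_one_sub, abs_mul, abs_of_pos (rpow_pos_of_pos hA0 _), mul_comm]
    _ ≤ ((1 + s) ^ K - 1) * A ^ (-K) := by gcongr

theorem one_add_rpow_sub_one_le {K s : ℝ} (hK : 1 ≤ K) (hs : 0 ≤ s) :
    (1 + s) ^ K - 1 ≤ 2 ^ K * (s + s ^ (K + 1)) := by
  have h2K : 1 ≤ (2 : ℝ) ^ K := one_le_rpow one_le_two (by linarith)
  have hsK : 0 ≤ s ^ (K + 1) := rpow_nonneg hs _
  rcases le_total s 1 with h1 | h1
  · have hc := (convexOn_rpow hK).2 (Set.mem_Ici.2 zero_le_one) (Set.mem_Ici.2 zero_le_two)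
      (sub_nonneg.2 h1) hs (by ring)
    simp only [smul_eq_mul, one_rpow, mul_one] at hc
    rw [show 1 - s + s * 2 = 1 + s by ring] at hc
    nlinarith
  · have : (1 + s) ^ K ≤ 2 ^ K * s ^ (K + 1) :=
      calc (1 + s) ^ K ≤ (2 * s) ^ K := by gcongr; linarith
        _ = 2 ^ K * s ^ K := mul_rpow zero_le_two hs
        _ ≤ 2 ^ K * s ^ (K + 1) := by gcongr; linarith
    nlinarith

theorem one_add_div_rpow_sub_one_le {K R t : ℝ} (hK : 1 ≤ K) (hR : 0 < R) (ht : 0 ≤ t) :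
    (1 + t / R) ^ K - 1 ≤ 2 ^ K * R⁻¹ * (t + R ^ (-K) * t ^ (K + 1)) := by
  refine (one_add_rpow_sub_one_le hK (div_nonneg ht hR.le)).trans_eq ?_
  rw [div_rpow ht hR.le, rpow_add hR, rpow_one, rpow_neg hR.le]
  ring

section Kernel

variable {n : ℕ} {K R : ℝ}

theorem phiR_eq_sqrt_rpow (x : EuclideanSpace ℝ (Fin n)) :
    phiR n K R x = (R ^ n)⁻¹ * √(1 + ‖R⁻¹ • x‖ ^ 2) ^ (-K) := by
  rw [phiR, sqrt_eq_rpow, ← rpow_mul (by positivity)]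
  ring_nf

theorem phiR_nonneg (hR : 0 < R) (x : EuclideanSpace ℝ (Fin n)) : 0 ≤ phiR n K R x := by
  unfold phiR; positivity

theorem abs_phiR_sub_phiR_le (hK : 0 ≤ K) (hR : 0 < R) (x y : EuclideanSpace ℝ (Fin n)) :
    |phiR n K R x - phiR n K R y| ≤ ((1 + ‖x - y‖ / R) ^ K - 1) * phiR n K R x := by
  have one_le_bracket (z : EuclideanSpace ℝ (Fin n)) : 1 ≤ √(1 + ‖z‖ ^ 2) :=
    one_le_sqrt.2 (le_add_of_nonneg_right (sq_nonneg _))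
  have hdist := (abs_sqrt_one_add_norm_sq_sub_le (R⁻¹ • x) (R⁻¹ • y)).trans_eq <| by
    rw [← smul_sub, norm_smul, norm_inv, norm_of_nonneg hR.le, inv_mul_eq_div]
  have key := abs_rpow_neg_sub_rpow_neg_le hK (one_le_bracket _) (one_le_bracket _) hdist
  rw [phiR_eq_sqrt_rpow, phiR_eq_sqrt_rpow, ← mul_sub, abs_mul, abs_of_pos (by positivity), mul_left_comm]
  exact mul_le_mul_of_nonneg_left key (by positivity)

theorem eabsdiff_convPhi_le (hK : 0 ≤ K) (hR : 0 < R) {f : EuclideanSpace ℝ (Fin n) → ℝ}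
    (hf : Measurable f) (α β : EuclideanSpace ℝ (Fin n)) :
    eabsdiff (convPhi n K R f α) (convPhi n K R f (α + β)) ≤
      ENNReal.ofReal ((1 + ‖β‖ / R) ^ K - 1) * convPhi n K R f α := by
  rw [convPhi, convPhi, ← lintegral_const_mul' _ _ ENNReal.ofReal_ne_top]
  refine eabsdiff_lintegral_le (by unfold phiR; fun_prop) fun ζ => ?_
  have hker := abs_phiR_sub_phiR_le (n := n) hK hR (α - ζ) (α + β - ζ)
  rw [show α - ζ - (α + β - ζ) = -β by abel, norm_neg] at hker
  simp only [ENNReal.ofReal_mul' (phiR_nonneg hR _)]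
  calc _ ≤ ENNReal.ofReal (f ζ) *
        eabsdiff (ENNReal.ofReal (phiR n K R (α - ζ))) (ENNReal.ofReal (phiR n K R (α + β - ζ))) :=
        eabsdiff_mul_left_le _ _ _
    _ ≤ ENNReal.ofReal (f ζ) * ENNReal.ofReal ((1 + ‖β‖ / R) ^ K - 1) *
          ENNReal.ofReal (phiR n K R (α - ζ)) := by
        rw [mul_assoc, ← ENNReal.ofReal_mul' (phiR_nonneg hR _)]
        gcongr
        exact eabsdiff_ofReal_le hker
    _ = _ := by ring

end Kernel

theorem convPhi_average_displacement_general (n : ℕ) (K : ℝ) (hK : 1 ≤ K) :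
    ∃ C : ℝ, ∀ R : ℝ, 0 < R →
      ∀ γ : EuclideanSpace ℝ (Fin n) → ℝ, Measurable γ → (∀ β, 0 ≤ γ β) →
      Integrable (fun β : EuclideanSpace ℝ (Fin n) => ‖β‖ * γ β) →
      Integrable (fun β : EuclideanSpace ℝ (Fin n) => ‖β‖ ^ (K + 1) * γ β) →
      ∀ f : EuclideanSpace ℝ (Fin n) → ℝ, Measurable f → (∀ ζ, 0 ≤ f ζ) →
      ∀ α : EuclideanSpace ℝ (Fin n), convPhi n K R f α < ⊤ →
        ∫⁻ β : EuclideanSpace ℝ (Fin n),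
            eabsdiff (convPhi n K R f α) (convPhi n K R f (α + β)) * ENNReal.ofReal (γ β)
          ≤ ENNReal.ofReal
              (C * R⁻¹ *
                ((∫ β : EuclideanSpace ℝ (Fin n), ‖β‖ * γ β) +
                  R ^ (-K) * ∫ β : EuclideanSpace ℝ (Fin n), ‖β‖ ^ (K + 1) * γ β)) *
            convPhi n K R f α := by
  refine ⟨2 ^ K, fun R hR γ _ hγ₀ hM₁ hMK f hf _ α hα => ?_⟩
  set F := convPhi n K R f α
  set w : EuclideanSpace ℝ (Fin n) → ℝ := fun β =>
    2 ^ K * R⁻¹ * (‖β‖ * γ β) + 2 ^ K * R⁻¹ * R ^ (-K) * (‖β‖ ^ (K + 1) * γ β)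
  have hw : Integrable w := (hM₁.const_mul _).add (hMK.const_mul _)
  have hw₀ : ∀ β, 0 ≤ w β := fun β => by have := hγ₀ β; positivity
  have hpointwise : ∀ β, eabsdiff F (convPhi n K R f (α + β)) * ENNReal.ofReal (γ β) ≤
      F * ENNReal.ofReal (w β) := fun β =>
    calc _ ≤ ENNReal.ofReal ((1 + ‖β‖ / R) ^ K - 1) * F * ENNReal.ofReal (γ β) := by
          gcongr; exact eabsdiff_convPhi_le (by linarith) hR hf α β
      _ ≤ ENNReal.ofReal (2 ^ K * R⁻¹ * (‖β‖ + R ^ (-K) * ‖β‖ ^ (K + 1))) * F *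
            ENNReal.ofReal (γ β) := by
          gcongr; exact one_add_div_rpow_sub_one_le hK hR (norm_nonneg β)
      _ = F * ENNReal.ofReal (w β) := by
          rw [mul_right_comm, mul_comm, ← ENNReal.ofReal_mul' (hγ₀ β)]
          congr 2
          ring
  calc _ ≤ ∫⁻ β, F * ENNReal.ofReal (w β) := lintegral_mono hpointwise
    _ = F * ENNReal.ofReal (∫ β, w β) := by
        rw [lintegral_const_mul' _ _ hα.ne,
          ofReal_integral_eq_lintegral_ofReal hw (ae_of_all _ hw₀)]
    _ = _ := by
        rw [integral_add (hM₁.const_mul _) (hMK.const_mul _), integral_const_mul,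
          integral_const_mul, mul_comm]
        ring_nf

/-- there is `C = C(n, K)` such that for every `R > 0`, every measurable
`γ : ℝ^n → [0, ∞)` with finite moments `M₁ = ∫ |β| γ(β) dβ` and
`M_{K+1} = ∫ |β|^{K+1} γ(β) dβ`, every measurable `f : ℝ^n → [0, ∞)` and every `α` with
`(f ∗ φ_R)(α) < ∞`, one has
`∫ |(f ∗ φ_R)(α) − (f ∗ φ_R)(α + β)| γ(β) dβ ≤ C R⁻¹ (M₁ + R^{-K} M_{K+1}) (f ∗ φ_R)(α)`. -/
theorem convPhi_average_displacement (n : ℕ) (hn : 1 ≤ n) (K : ℝ) (hK : 1 ≤ K) :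
    ∃ C : ℝ, ∀ R : ℝ, 0 < R →
      ∀ γ : EuclideanSpace ℝ (Fin n) → ℝ, Measurable γ → (∀ β, 0 ≤ γ β) →
      Integrable (fun β : EuclideanSpace ℝ (Fin n) => ‖β‖ * γ β) →
      Integrable (fun β : EuclideanSpace ℝ (Fin n) => ‖β‖ ^ (K + 1) * γ β) →
      ∀ f : EuclideanSpace ℝ (Fin n) → ℝ, Measurable f → (∀ ζ, 0 ≤ f ζ) →
      ∀ α : EuclideanSpace ℝ (Fin n), convPhi n K R f α < ⊤ →
        ∫⁻ β : EuclideanSpace ℝ (Fin n),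
            eabsdiff (convPhi n K R f α) (convPhi n K R f (α + β)) * ENNReal.ofReal (γ β)
          ≤ ENNReal.ofReal
              (C * R⁻¹ *
                ((∫ β : EuclideanSpace ℝ (Fin n), ‖β‖ * γ β) +
                  R ^ (-K) * ∫ β : EuclideanSpace ℝ (Fin n), ‖β‖ ^ (K + 1) * γ β)) *
            convPhi n K R f α :=
  convPhi_average_displacement_general n K hK
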